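/- Mischaracterization probability: Suppose the rate-function family satisfies the growth conditions (G1) and (G2), I_θ(0) = 0 for all θ ∈ Θ, J : Θ → ℝ is uniformly continuous on bounded subsets of Θ, and assume each J̄^δ_{T,r} and J̲^δ_{T,r} is Borel measurable. Fix r > 0, δ > 0 and θ0 ∈ Θ, and assume the LDP lower bound at θ0. Then for every θ̃0 ∈ Θ with J(θ̃0) > J(θ0), lim_{T→∞} (1/b_T) log P_{θ0}(J(θ̃0) > J̄^δ_{T,r}(θ̂_T)) = 0, and for every θ̃0 ∈ Θ with J(θ̃0) < J(θ0), lim_{T→∞} (1/b_T) log P_{θ0}(J(θ̃0) < J̲^δ_{T,r}(θ̂_T)) = 0. -/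

import Mathlib

set_option autoImplicit false

open Filter Topology Metric Set MeasureTheory

noncomputable section

variable {E : Type*} [NormedAddCommGroup E] [NormedSpace ℝ E]

/-- The sublevel set `S_{θ,r} = {ϑ ∈ E : I_θ(ϑ) ≤ r}` of the rate function. -/
def sublevelSet (I : E → E → ENNReal) (θ : E) (r : ℝ) : Set E :=
  {ϑ : E | I θ ϑ ≤ ENNReal.ofReal r}

/-- The open `δ`-fattening `S^δ_{θ,r}` of the sublevel set, where `S^0_{θ,r} = S_{θ,r}`;
for `δ > 0` it is the set of points at distance `< δ` from `S_{θ,r}`, i.e. the union of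
open balls of radius `δ` around points of `S_{θ,r}`. -/
def fatSublevel (I : E → E → ENNReal) (θ : E) (r δ : ℝ) : Set E :=
  if δ = 0 then sublevelSet I θ r
  else ⋃ ϑ ∈ sublevelSet I θ r, Metric.ball ϑ δ

/-- Growth condition (G1): for sequences `θ_n ∈ Θ` with `sup_n ‖θ_n‖ < ∞` and
`‖ϑ_n‖ → ∞`, `I_{θ_n}(ϑ_n) → ∞`. -/
def GrowthG1 (Θ : Set E) (I : E → E → ENNReal) : Prop :=
  ∀ θs ϑs : ℕ → E, (∀ n, θs n ∈ Θ) → (∃ C : ℝ, ∀ n, ‖θs n‖ ≤ C) →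
    Tendsto (fun n => ‖ϑs n‖) atTop atTop →
    Tendsto (fun n => I (θs n) (ϑs n)) atTop (nhds ⊤)

/-- Growth condition (G2): for sequences `θ_n ∈ Θ` with `‖θ_n‖ → ∞` and
`‖ϑ_n‖/‖θ_n‖ → ∞`, `limsup_n I_{θ_n}(ϑ_n) = ∞`. -/
def GrowthG2 (Θ : Set E) (I : E → E → ENNReal) : Prop :=
  ∀ θs ϑs : ℕ → E, (∀ n, θs n ∈ Θ) →
    Tendsto (fun n => ‖θs n‖) atTop atTop →
    Tendsto (fun n => ‖ϑs n‖ / ‖θs n‖) atTop atTop →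
    Filter.limsup (fun n => I (θs n) (ϑs n)) atTop = ⊤

/-- The upper confidence bound `J̄^δ_{T,r}(θ') = sup {J(θ) : θ ∈ Θ, a_T (θ' - θ) ∈ S^δ_{θ,r}}`. -/
def upperCB (Θ : Set E) (I : E → E → ENNReal) (J : E → ℝ) (r δ : ℝ) (a : ℝ → ℝ)
    (T : ℝ) (θ' : E) : ℝ :=
  sSup (J '' {θ : E | θ ∈ Θ ∧ a T • (θ' - θ) ∈ fatSublevel I θ r δ})

/-- The lower confidence bound `J̲^δ_{T,r}(θ') = inf {J(θ) : θ ∈ Θ, a_T (θ' - θ) ∈ S^δ_{θ,r}}`. -/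
def lowerCB (Θ : Set E) (I : E → E → ENNReal) (J : E → ℝ) (r δ : ℝ) (a : ℝ → ℝ)
    (T : ℝ) (θ' : E) : ℝ :=
  sInf (J '' {θ : E | θ ∈ Θ ∧ a T • (θ' - θ) ∈ fatSublevel I θ r δ})

variable {Ω : Type*} [MeasurableSpace Ω]

/-- LDP lower bound at `θ0` for the family `a_T (θ̂_T − θ0)` with speed `b_T`:
for every open `G ⊆ E`,
`liminf_{T→∞} (1/b_T) log P(a_T(θ̂_T − θ0) ∈ G) ≥ − inf_{ϑ ∈ G} I(ϑ)`. -/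
def LDPLowerAt (P : Measure Ω) (θhat : ℝ → Ω → E) (a b : ℝ → ℝ)
    (Irate : E → ENNReal) (θ0 : E) : Prop :=
  ∀ G : Set E, IsOpen G →
    -(((⨅ ϑ ∈ G, Irate ϑ) : ENNReal) : EReal) ≤
      Filter.liminf
        (fun T => (((b T)⁻¹ : ℝ) : EReal) *
          ENNReal.log (P {ω | a T • (θhat T ω - θ0) ∈ G})) atTop

/-- LDP upper bound at `θ0` for the family `a_T (θ̂_T − θ0)` with speed `b_T`:
for every closed `F ⊆ E`,
`limsup_{T→∞} (1/b_T) log P(a_T(θ̂_T − θ0) ∈ F) ≤ − inf_{ϑ ∈ F} I(ϑ)`. -/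
def LDPUpperAt (P : Measure Ω) (θhat : ℝ → Ω → E) (a b : ℝ → ℝ)
    (Irate : E → ENNReal) (θ0 : E) : Prop :=
  ∀ F : Set E, IsClosed F →
    Filter.limsup
      (fun T => (((b T)⁻¹ : ℝ) : EReal) *
        ENNReal.log (P {ω | a T • (θhat T ω - θ0) ∈ F})) atTop ≤
      -(((⨅ ϑ ∈ F, Irate ϑ) : ENNReal) : EReal)

/-! On the event `‖a_T (θ̂_T - θ0)‖ < δ`, whose probability is `exp (-o(b_T))` by the LDP lower
bound and `I_{θ0}(0) = 0`, the point `θ0` itself lies in the confidence region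
`{θ ∈ Θ : a_T (θ̂_T - θ) ∈ S^δ_{θ,r}}`. The growth conditions force the sublevel sets `S_{θ,r}` to
grow at most linearly in `‖θ‖`, so as `a_T → ∞` this region shrinks to `θ0`, uniformly on the
event. By continuity of `J` at `θ0` both `J̄^δ_{T,r}(θ̂_T)` and `J̲^δ_{T,r}(θ̂_T)` are then close to
`J(θ0)`, so the event is contained in the mischaracterization event. -/

omit [NormedSpace ℝ E] in
lemma GrowthG1.exists_norm_le {Θ : Set E} {I : E → E → ENNReal} (hG1 : GrowthG1 Θ I)
    {c : ENNReal} (hc : c ≠ ⊤) (C : ℝ) :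
    ∃ M : ℝ, ∀ θ ∈ Θ, ‖θ‖ ≤ C → ∀ ϑ, I θ ϑ ≤ c → ‖ϑ‖ ≤ M := by
  by_contra! h
  choose θs hθΘ hθC ϑs hIc hϑ using fun n : ℕ => h n
  have hϑtop : Tendsto (fun n => ‖ϑs n‖) atTop atTop :=
    tendsto_atTop_mono (fun n => (hϑ n).le) tendsto_natCast_atTop_atTop
  obtain ⟨n, hn⟩ := ((hG1 θs ϑs hθΘ ⟨C, hθC⟩ hϑtop).eventually
    (eventually_gt_nhds hc.lt_top)).exists
  exact (hIc n).not_gt hn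

omit [NormedSpace ℝ E] in
lemma GrowthG2.exists_norm_le_mul {Θ : Set E} {I : E → E → ENNReal} (hG2 : GrowthG2 Θ I)
    {c : ENNReal} (hc : c ≠ ⊤) :
    ∃ C K : ℝ, ∀ θ ∈ Θ, C ≤ ‖θ‖ → ∀ ϑ, I θ ϑ ≤ c → ‖ϑ‖ ≤ K * ‖θ‖ := by
  by_contra! h
  choose θs hθΘ hθn ϑs hIc hϑ using fun n : ℕ => h (n + 1) (n + 1)
  have hθpos : ∀ n, 0 < ‖θs n‖ := fun n => lt_of_lt_of_le (by positivity) (hθn n)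
  have hθtop : Tendsto (fun n => ‖θs n‖) atTop atTop :=
    tendsto_atTop_mono (fun n => (lt_add_one _).le.trans (hθn n)) tendsto_natCast_atTop_atTop
  have hratio : Tendsto (fun n => ‖ϑs n‖ / ‖θs n‖) atTop atTop := by
    refine tendsto_atTop_mono (fun n => ?_) tendsto_natCast_atTop_atTop
    rw [le_div_iff₀ (hθpos n)]
    nlinarith [hϑ n, hθpos n]
  have hlimsup : limsup (fun n => I (θs n) (ϑs n)) atTop ≤ c :=
    limsup_le_of_le (by isBoundedDefault) (Eventually.of_forall hIc)
  rw [hG2 θs ϑs hθΘ hθtop hratio] at hlimsup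
  exact hc (top_le_iff.1 hlimsup)

omit [NormedSpace ℝ E] in
lemma exists_norm_le_add_mul_of_growth {Θ : Set E} {I : E → E → ENNReal}
    (hG1 : GrowthG1 Θ I) (hG2 : GrowthG2 Θ I) {c : ENNReal} (hc : c ≠ ⊤) :
    ∃ A K : ℝ, 0 ≤ A ∧ 0 ≤ K ∧ ∀ θ ∈ Θ, ∀ ϑ, I θ ϑ ≤ c → ‖ϑ‖ ≤ A + K * ‖θ‖ := by
  obtain ⟨C, K, hK⟩ := hG2.exists_norm_le_mul hc
  obtain ⟨M, hM⟩ := hG1.exists_norm_le hc C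
  refine ⟨max M 0, max K 0, le_max_right _ _, le_max_right _ _, fun θ hθ ϑ hϑ => ?_⟩
  have hKθ : 0 ≤ max K 0 * ‖θ‖ := mul_nonneg (le_max_right _ _) (norm_nonneg θ)
  rcases le_total ‖θ‖ C with hθC | hCθ
  · linarith [hM θ hθ hθC ϑ hϑ, le_max_left M 0]
  · nlinarith [hK θ hθ hCθ ϑ hϑ, le_max_left K 0, le_max_right M 0, norm_nonneg θ]

omit [NormedSpace ℝ E] in
lemma exists_mem_sublevelSet_of_mem_fatSublevel {I : E → E → ENNReal} {θ v : E} {r δ : ℝ}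
    (hv : v ∈ fatSublevel I θ r δ) : ∃ ϑ ∈ sublevelSet I θ r, ‖v - ϑ‖ ≤ δ := by
  unfold fatSublevel at hv
  split_ifs at hv with hδ0
  · exact ⟨v, hv, by simp [hδ0]⟩
  · obtain ⟨ϑ, hϑ, hvϑ⟩ := mem_iUnion₂.1 hv
    exact ⟨ϑ, hϑ, (mem_ball_iff_norm.1 hvϑ).le⟩

omit [NormedSpace ℝ E] in
lemma mem_fatSublevel_of_norm_sub_lt {I : E → E → ENNReal} {θ v ϑ : E} {r δ : ℝ}
    (hϑ : ϑ ∈ sublevelSet I θ r) (hvϑ : ‖v - ϑ‖ < δ) : v ∈ fatSublevel I θ r δ := by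
  have hδ : δ ≠ 0 := (lt_of_le_of_lt (norm_nonneg _) hvϑ).ne'
  rw [fatSublevel, if_neg hδ]
  exact mem_iUnion₂.2 ⟨ϑ, hϑ, mem_ball_iff_norm.2 hvϑ⟩

/-- The region over which `upperCB` and `lowerCB` take the supremum and infimum of `J`,
with `s = a_T`. -/
def confidenceSet (Θ : Set E) (I : E → E → ENNReal) (r δ s : ℝ) (θ' : E) : Set E :=
  {θ : E | θ ∈ Θ ∧ s • (θ' - θ) ∈ fatSublevel I θ r δ}

lemma mem_confidenceSet_self {Θ : Set E} {I : E → E → ENNReal} {r δ s : ℝ} {θ0 θ' : E}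
    (hθ0 : θ0 ∈ Θ) (hI0 : I θ0 0 = 0) (hθ' : ‖s • (θ' - θ0)‖ < δ) :
    θ0 ∈ confidenceSet Θ I r δ s θ' := by
  refine ⟨hθ0, mem_fatSublevel_of_norm_sub_lt (ϑ := 0) ?_ (by rwa [sub_zero])⟩
  simp [sublevelSet, hI0]

lemma eventually_confidenceSet_subset_ball {Θ : Set E} {I : E → E → ENNReal}
    (hG1 : GrowthG1 Θ I) (hG2 : GrowthG2 Θ I) {r δ : ℝ} (ρ : ℝ) (θ0 : E)
    {η : ℝ} (hη : 0 < η) :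
    ∀ᶠ s in atTop, ∀ θ', ‖s • (θ' - θ0)‖ < ρ → confidenceSet Θ I r δ s θ' ⊆ ball θ0 η := by
  obtain ⟨A, K, hA, hK, hlin⟩ := exists_norm_le_add_mul_of_growth hG1 hG2 ENNReal.ofReal_ne_top
  set B := A + K * ‖θ0‖ + δ + ρ
  filter_upwards [eventually_gt_atTop (K + B / η)] with s hs θ' hθ' θ ⟨hθ, hmem⟩
  obtain ⟨ϑ, hϑ, hvϑ⟩ := exists_mem_sublevelSet_of_mem_fatSublevel hmem
  have hB : 0 ≤ B := by
    have := (norm_nonneg _).trans_lt hθ'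
    have := (norm_nonneg _).trans hvϑ
    positivity
  have hs0 : 0 < s := by linarith [div_nonneg hB hη.le]
  -- `s ‖θ - θ0‖ ≤ B + K ‖θ - θ0‖` with `s - K > B / η` forces `‖θ - θ0‖ < η`
  have hkey : s * ‖θ - θ0‖ ≤ B + K * ‖θ - θ0‖ :=
    calc s * ‖θ - θ0‖ = ‖s • (θ' - θ0) - s • (θ' - θ)‖ := by
          rw [← smul_sub, sub_sub_sub_cancel_left, norm_smul, Real.norm_of_nonneg hs0.le]
      _ ≤ ρ + (‖ϑ‖ + δ) := (norm_sub_le _ _).trans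
          (add_le_add hθ'.le ((norm_le_norm_add_norm_sub' _ ϑ).trans (by gcongr)))
      _ ≤ ρ + (A + K * ‖θ‖ + δ) := by gcongr; exact hlin θ hθ ϑ hϑ
      _ ≤ B + K * ‖θ - θ0‖ := by
          nlinarith [norm_le_norm_add_norm_sub' θ θ0, norm_sub_rev θ θ0]
  have hBη : B < (s - K) * η := by rw [← div_lt_iff₀ hη]; linarith
  rw [mem_ball, dist_eq_norm]
  by_contra! hfar
  nlinarith

lemma eventually_upperCB_le_and_le_lowerCB {Θ : Set E} {I : E → E → ENNReal} {J : E → ℝ}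
    (hG1 : GrowthG1 Θ I) (hG2 : GrowthG2 Θ I) {θ0 : E} (hθ0 : θ0 ∈ Θ) (hI0 : I θ0 0 = 0)
    (hJ : ContinuousWithinAt J Θ θ0) {r δ : ℝ} {a : ℝ → ℝ}
    (ha : Tendsto a atTop atTop) {ε : ℝ} (hε : 0 < ε) :
    ∀ᶠ T in atTop, ∀ θ', ‖a T • (θ' - θ0)‖ < δ →
      upperCB Θ I J r δ a T θ' ≤ J θ0 + ε ∧ J θ0 - ε ≤ lowerCB Θ I J r δ a T θ' := by
  obtain ⟨η, hη, hJη⟩ := Metric.continuousWithinAt_iff.1 hJ ε hε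
  filter_upwards [ha.eventually (eventually_confidenceSet_subset_ball hG1 hG2 δ θ0 hη)]
    with T hT θ' hθ'
  have hne : (J '' confidenceSet Θ I r δ (a T) θ').Nonempty :=
    ⟨J θ0, θ0, mem_confidenceSet_self hθ0 hI0 hθ', rfl⟩
  have hclose : ∀ x ∈ J '' confidenceSet Θ I r δ (a T) θ', |x - J θ0| < ε := by
    rintro _ ⟨θ, hθ, rfl⟩
    exact hJη hθ.1 (hT θ' hθ' hθ)
  exact ⟨csSup_le hne fun x hx => by linarith [(abs_lt.1 (hclose x hx)).2],
    le_csInf hne fun x hx => by linarith [(abs_lt.1 (hclose x hx)).1]⟩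

lemma LDPLowerAt.zero_le_liminf {P : Measure Ω} {θhat : ℝ → Ω → E} {a b : ℝ → ℝ}
    {Irate : E → ENNReal} {θ0 : E} (h : LDPLowerAt P θhat a b Irate θ0) {G : Set E}
    (hG : IsOpen G) {ϑ : E} (hϑ : ϑ ∈ G) (hϑ0 : Irate ϑ = 0) :
    0 ≤ liminf (fun T => (((b T)⁻¹ : ℝ) : EReal) *
      ENNReal.log (P {ω | a T • (θhat T ω - θ0) ∈ G})) atTop := by
  have hinf : ⨅ x ∈ G, Irate x = 0 := le_antisymm (hϑ0 ▸ iInf₂_le ϑ hϑ) bot_le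
  simpa [hinf] using h G hG

lemma tendsto_inv_mul_log_measure_of_subset {ι : Type*} {l : Filter ι} {P : Measure Ω}
    [IsZeroOrProbabilityMeasure P] {b : ι → ℝ} (hb : ∀ i, 0 ≤ b i) {s t : ι → Set Ω}
    (hts : ∀ᶠ i in l, t i ⊆ s i)
    (ht : 0 ≤ liminf (fun i => (((b i)⁻¹ : ℝ) : EReal) * ENNReal.log (P (t i))) l) :
    Tendsto (fun i => (((b i)⁻¹ : ℝ) : EReal) * ENNReal.log (P (s i))) l (𝓝 0) := by
  have hb' : ∀ i, (0 : EReal) ≤ (((b i)⁻¹ : ℝ) : EReal) := fun i =>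
    EReal.coe_nonneg.2 (inv_nonneg.2 (hb i))
  refine tendsto_of_le_liminf_of_limsup_le (ht.trans (liminf_le_liminf ?_))
    (limsup_le_of_le (by isBoundedDefault) (Eventually.of_forall fun i => ?_))
  · filter_upwards [hts] with i hi
    exact mul_le_mul_of_nonneg_left (ENNReal.log_monotone (measure_mono hi)) (hb' i)
  · exact mul_nonpos_of_nonneg_of_nonpos (hb' i) (ENNReal.log_le_zero_iff.2 prob_le_one)

theorem stmt13_general (Θ : Set E) (I : E → E → ENNReal) (J : E → ℝ)
    (P : E → Measure Ω) (hP : ∀ θ, IsProbabilityMeasure (P θ))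
    (θhat : ℝ → Ω → E)
    (b a : ℝ → ℝ) (hbpos : ∀ T, 0 < b T)
    (hatop : Tendsto a atTop atTop)
    (hG1 : GrowthG1 Θ I) (hG2 : GrowthG2 Θ I)
    (hI0 : ∀ θ ∈ Θ, I θ 0 = 0)
    (hJ : ∀ a0 > (0 : ℝ), ∀ θ0 ∈ Θ, UniformContinuousOn J (Metric.closedBall θ0 a0 ∩ Θ))
    (r δ : ℝ) (hδ : 0 < δ)
    (θ0 : E) (hθ0 : θ0 ∈ Θ)
    (hLDPlow : LDPLowerAt (P θ0) θhat a b (I θ0) θ0) :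
    (∀ θt0 ∈ Θ, J θ0 < J θt0 →
      Tendsto
        (fun T => (((b T)⁻¹ : ℝ) : EReal) *
          ENNReal.log (P θ0 {ω | upperCB Θ I J r δ a T (θhat T ω) < J θt0}))
        atTop (nhds 0)) ∧
    (∀ θt0 ∈ Θ, J θt0 < J θ0 →
      Tendsto
        (fun T => (((b T)⁻¹ : ℝ) : EReal) *
          ENNReal.log (P θ0 {ω | J θt0 < lowerCB Θ I J r δ a T (θhat T ω)}))
        atTop (nhds 0)) := by
  have := hP θ0
  have hJθ0 : ContinuousWithinAt J Θ θ0 := by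
    have hJon := (hJ 1 one_pos θ0 hθ0).continuousOn θ0 ⟨mem_closedBall_self zero_le_one, hθ0⟩
    rwa [inter_comm, continuousWithinAt_inter (closedBall_mem_nhds θ0 one_pos)] at hJon
  have hLDP := hLDPlow.zero_le_liminf isOpen_ball (mem_ball_self hδ) (hI0 θ0 hθ0)
  have hnear := fun ε (hε : 0 < ε) => eventually_upperCB_le_and_le_lowerCB (r := r) (δ := δ)
    hG1 hG2 hθ0 (hI0 θ0 hθ0) hJθ0 hatop hε
  refine ⟨fun θt0 _ hlt => ?_, fun θt0 _ hlt => ?_⟩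
  · refine tendsto_inv_mul_log_measure_of_subset (fun T => (hbpos T).le) ?_ hLDP
    filter_upwards [hnear _ (half_pos (sub_pos.2 hlt))] with T hT ω hω
    have := (hT _ (mem_ball_zero_iff.1 hω)).1
    simp only [mem_ofPred_eq]
    linarith
  · refine tendsto_inv_mul_log_measure_of_subset (fun T => (hbpos T).le) ?_ hLDP
    filter_upwards [hnear _ (half_pos (sub_pos.2 hlt))] with T hT ω hω
    have := (hT _ (mem_ball_zero_iff.1 hω)).2
    simp only [mem_ofPred_eq]
    linarith

/-- mischaracterization probability: for every `θ̃0` with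
`J(θ̃0) > J(θ0)`, the probability `P_{θ0}(J(θ̃0) > J̄^δ_{T,r}(θ̂_T))` does not decay
exponentially: `(1/b_T) log P_{θ0}(J(θ̃0) > J̄^δ_{T,r}(θ̂_T)) → 0`; symmetrically for the
lower bound. -/
theorem stmt13 (Θ : Set E) (hΘ : Θ.Nonempty) (I : E → E → ENNReal) (J : E → ℝ)
    [MeasurableSpace E] [BorelSpace E]
    (P : E → Measure Ω) (hP : ∀ θ, IsProbabilityMeasure (P θ))
    (θhat : ℝ → Ω → E) (hθhatmeas : ∀ T, Measurable (θhat T))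
    (b a : ℝ → ℝ) (hbpos : ∀ T, 0 < b T) (hbtop : Tendsto b atTop atTop)
    (hadef : ∀ T, a T = Real.sqrt (T / b T)) (hatop : Tendsto a atTop atTop)
    (hG1 : GrowthG1 Θ I) (hG2 : GrowthG2 Θ I)
    (hI0 : ∀ θ ∈ Θ, I θ 0 = 0)
    (hJ : ∀ a0 > (0 : ℝ), ∀ θ0 ∈ Θ, UniformContinuousOn J (Metric.closedBall θ0 a0 ∩ Θ))
    (r δ : ℝ) (hr : 0 < r) (hδ : 0 < δ)
    (hmeasU : ∀ T, Measurable (upperCB Θ I J r δ a T))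
    (hmeasL : ∀ T, Measurable (lowerCB Θ I J r δ a T))
    (θ0 : E) (hθ0 : θ0 ∈ Θ)
    (hLDPlow : LDPLowerAt (P θ0) θhat a b (I θ0) θ0) :
    (∀ θt0 ∈ Θ, J θ0 < J θt0 →
      Tendsto
        (fun T => (((b T)⁻¹ : ℝ) : EReal) *
          ENNReal.log (P θ0 {ω | upperCB Θ I J r δ a T (θhat T ω) < J θt0}))
        atTop (nhds 0)) ∧
    (∀ θt0 ∈ Θ, J θt0 < J θ0 →
      Tendsto
        (fun T => (((b T)⁻¹ : ℝ) : EReal) *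
          ENNReal.log (P θ0 {ω | J θt0 < lowerCB Θ I J r δ a T (θhat T ω)}))
        atTop (nhds 0)) :=
  stmt13_general Θ I J P hP θhat b a hbpos hatop hG1 hG2 hI0 hJ r δ hδ θ0 hθ0 hLDPlow
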